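/- If ρ is a fully separable tripartite state, i.e. ρ = Σ_k p_k |φ_A^(k)⟩⟨φ_A^(k)| ⊗ |φ_B^(k)⟩⟨φ_B^(k)| ⊗ |φ_C^(k)⟩⟨φ_C^(k)|, then there exist matrices κ_A = Σ_k p_k γ(|φ_A^(k)⟩⟨φ_A^(k)|), κ_B, κ_C (defined analogously) such that the block covariance matrix of ρ with local observables satisfies γ(ρ) ≥ κ_A ⊕ κ_B ⊕ κ_C (the difference is positive semidefinite). -/

import Mathlib

/-!
The covariance matrix is concave: if `σ = ∑ₖ pₖ σₖ` and `vₖ` is the vector of expectation values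
`Re tr (σₖ Mᵢ)`, then `γ(σ) - ∑ₖ pₖ γ(σₖ) = ∑ₖ pₖ (vₖ - v̄)(vₖ - v̄)ᵀ` with `v̄ = ∑ₖ pₖ vₖ`, a
positive semidefinite matrix. For a product state, the covariance of observables acting on
different parties vanishes (their expectation values are real and multiply), while on a single
party it is the covariance of that party's state; so `γ` of each product term is block diagonal,
and averaging the blocks gives `κ_A ⊕ κ_B ⊕ κ_C`.
-/

open Matrix ComplexOrder Kronecker

/-- Covariance matrix of a state `σ` with respect to observables `M`. -/
noncomputable def covMat {d ι : Type*} [Fintype d] [DecidableEq d] [Fintype ι]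
    (σ : Matrix d d ℂ) (M : ι → Matrix d d ℂ) : Matrix ι ι ℝ :=
  Matrix.of fun i j =>
    ((1 / 2 : ℂ) * (σ * (M i * M j + M j * M i)).trace).re
      - ((σ * M i).trace).re * ((σ * M j).trace).re

theorem Matrix.IsHermitian.kronecker {R m n : Type*} [CommRing R] [StarRing R]
    {A : Matrix m m R} {B : Matrix n n R} (hA : A.IsHermitian) (hB : B.IsHermitian) :
    (A ⊗ₖ B).IsHermitian := by
  rw [IsHermitian, conjTranspose_kronecker, hA.eq, hB.eq]

theorem Matrix.IsHermitian.im_trace_mul {n : Type*} [Fintype n] {A B : Matrix n n ℂ}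
    (hA : A.IsHermitian) (hB : B.IsHermitian) : (A * B).trace.im = 0 := by
  have h : star (A * B).trace = (A * B).trace := by
    rw [← trace_conjTranspose, conjTranspose_mul, hA.eq, hB.eq, trace_mul_comm]
  exact Complex.conj_eq_iff_im.mp h

theorem trace_vecMulVec_self_star {d : Type*} [Fintype d] {φ : d → ℂ}
    (h : ∑ i, Complex.normSq (φ i) = 1) : (vecMulVec φ (star φ)).trace = 1 := by
  simp [trace_vecMulVec, dotProduct, Complex.mul_conj, ← Complex.ofReal_sum, h]

theorem sum_mul_mul_sub_mul_sum_eq_sum_mul_centered {κ : Type*} [Fintype κ] (p : κ → ℝ)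
    (hp : ∑ k, p k = 1) (a b : κ → ℝ) :
    ∑ k, p k * (a k * b k) - (∑ k, p k * a k) * (∑ k, p k * b k)
      = ∑ k, p k * ((a k - ∑ l, p l * a l) * (b k - ∑ l, p l * b l)) := by
  set ma := ∑ l, p l * a l
  set mb := ∑ l, p l * b l
  have h : ∀ k, p k * ((a k - ma) * (b k - mb))
      = p k * (a k * b k) - p k * a k * mb - ma * (p k * b k) + ma * mb * p k := fun k => by ring
  simp only [h, Finset.sum_add_distrib, Finset.sum_sub_distrib, ← Finset.sum_mul,
    ← Finset.mul_sum, hp]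
  ring

theorem posSemidef_sum_smul_vecMulVec {κ ι : Type*} [Fintype κ] [Fintype ι] (p : κ → ℝ)
    (hp : ∀ k, 0 ≤ p k) (u : κ → ι → ℝ) :
    (∑ k, p k • vecMulVec (u k) (u k)).PosSemidef :=
  posSemidef_sum _ fun k _ => by
    simpa using (posSemidef_vecMulVec_self_star (u k)).smul (hp k)

section Covariance

variable {d ι : Type*} [Fintype d]

noncomputable def covariance (σ X Y : Matrix d d ℂ) : ℝ :=
  ((1 / 2 : ℂ) * (σ * (X * Y + Y * X)).trace).re - (σ * X).trace.re * (σ * Y).trace.re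

theorem covMat_apply [DecidableEq d] [Fintype ι] (σ : Matrix d d ℂ) (M : ι → Matrix d d ℂ)
    (i j : ι) :
    covMat σ M i j = covariance σ (M i) (M j) := rfl

theorem covariance_comm (σ X Y : Matrix d d ℂ) : covariance σ X Y = covariance σ Y X := by
  simp only [covariance, add_comm (X * Y), mul_comm (σ * X).trace.re]

theorem re_trace_sum_smul_mul {κ : Type*} [Fintype κ] (p : κ → ℝ) (σ : κ → Matrix d d ℂ)
    (c : ℂ) (X : Matrix d d ℂ) :
    (c * ((∑ k, p k • σ k) * X).trace).re = ∑ k, p k * (c * (σ k * X).trace).re := by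
  simp [Finset.sum_mul, trace_sum, Finset.mul_sum, Complex.re_sum, mul_left_comm c]

theorem covariance_sum_smul {κ : Type*} [Fintype κ] (p : κ → ℝ) (hp : ∑ k, p k = 1)
    (σ : κ → Matrix d d ℂ) (X Y : Matrix d d ℂ) :
    covariance (∑ k, p k • σ k) X Y - ∑ k, p k * covariance (σ k) X Y
      = ∑ k, p k * (((σ k * X).trace.re - ∑ l, p l * (σ l * X).trace.re)
          * ((σ k * Y).trace.re - ∑ l, p l * (σ l * Y).trace.re)) := by
  rw [← sum_mul_mul_sub_mul_sum_eq_sum_mul_centered p hp]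
  have h := re_trace_sum_smul_mul p σ 1
  simp only [one_mul] at h
  simp only [covariance, re_trace_sum_smul_mul, h, mul_sub, Finset.sum_sub_distrib]
  ring

theorem posSemidef_covMat_sum_smul_sub_sum_smul_covMat [DecidableEq d] [Fintype ι] {κ : Type*}
    [Fintype κ] (p : κ → ℝ) (hp : ∀ k, 0 ≤ p k) (hpsum : ∑ k, p k = 1) (σ : κ → Matrix d d ℂ)
    (M : ι → Matrix d d ℂ) :
    (covMat (∑ k, p k • σ k) M - ∑ k, p k • covMat (σ k) M).PosSemidef := by
  let u : κ → ι → ℝ := fun k i => (σ k * M i).trace.re - ∑ l, p l * (σ l * M i).trace.re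
  convert posSemidef_sum_smul_vecMulVec p hp u using 1
  ext i j
  simp only [Matrix.sub_apply, Matrix.sum_apply, Matrix.smul_apply, smul_eq_mul, covMat_apply,
    covariance_sum_smul p hpsum, vecMulVec_apply, u]

end Covariance

section ProductState

variable {m n : Type*} [Fintype m] [Fintype n] {σ₁ : Matrix m m ℂ} {σ₂ : Matrix n n ℂ}

theorem covariance_kronecker_one [DecidableEq n] (h₂ : σ₂.trace = 1) (X X' : Matrix m m ℂ) :
    covariance (σ₁ ⊗ₖ σ₂) (X ⊗ₖ 1) (X' ⊗ₖ 1) = covariance σ₁ X X' := by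
  simp [covariance, ← mul_kronecker_mul, ← add_kronecker, trace_kronecker, h₂]

theorem covariance_one_kronecker [DecidableEq m] (h₁ : σ₁.trace = 1) (Y Y' : Matrix n n ℂ) :
    covariance (σ₁ ⊗ₖ σ₂) (1 ⊗ₖ Y) (1 ⊗ₖ Y') = covariance σ₂ Y Y' := by
  simp [covariance, ← mul_kronecker_mul, ← kronecker_add, trace_kronecker, h₁]

theorem covariance_kronecker_one_one_kronecker [DecidableEq m] [DecidableEq n]
    (hσ₁ : σ₁.IsHermitian) (hσ₂ : σ₂.IsHermitian)
    (h₁ : σ₁.trace = 1) (h₂ : σ₂.trace = 1) {X : Matrix m m ℂ} {Y : Matrix n n ℂ}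
    (hX : X.IsHermitian) (hY : Y.IsHermitian) :
    covariance (σ₁ ⊗ₖ σ₂) (X ⊗ₖ 1) (1 ⊗ₖ Y) = 0 := by
  have hXY : (X ⊗ₖ 1) * (1 ⊗ₖ Y) + (1 ⊗ₖ Y) * (X ⊗ₖ 1) = (2 : ℂ) • (X ⊗ₖ Y) := by
    simp only [← mul_kronecker_mul, mul_one, one_mul, two_smul]
  rw [covariance, hXY, mul_smul_comm, trace_smul, smul_eq_mul, ← mul_assoc,
    one_div_mul_cancel two_ne_zero, one_mul]
  simp only [← mul_kronecker_mul, mul_one, trace_kronecker, h₁, h₂, one_mul,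
    Complex.mul_re, hσ₁.im_trace_mul hX, hσ₂.im_trace_mul hY, mul_zero, sub_zero, sub_self]

theorem covariance_one_kronecker_kronecker_one [DecidableEq m] [DecidableEq n]
    (hσ₁ : σ₁.IsHermitian) (hσ₂ : σ₂.IsHermitian)
    (h₁ : σ₁.trace = 1) (h₂ : σ₂.trace = 1) {X : Matrix m m ℂ} {Y : Matrix n n ℂ}
    (hX : X.IsHermitian) (hY : Y.IsHermitian) :
    covariance (σ₁ ⊗ₖ σ₂) (1 ⊗ₖ Y) (X ⊗ₖ 1) = 0 := by
  rw [covariance_comm, covariance_kronecker_one_one_kronecker hσ₁ hσ₂ h₁ h₂ hX hY]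

end ProductState

theorem covMat_kronecker_kronecker {a b c ιa ιb ιc : Type*} [Fintype a] [Fintype b]
    [Fintype c] [DecidableEq a] [DecidableEq b] [DecidableEq c] [Fintype ιa] [Fintype ιb]
    [Fintype ιc] {σA : Matrix a a ℂ} {σB : Matrix b b ℂ} {σC : Matrix c c ℂ}
    (hσA : σA.IsHermitian) (hσB : σB.IsHermitian) (hσC : σC.IsHermitian)
    (htrA : σA.trace = 1) (htrB : σB.trace = 1) (htrC : σC.trace = 1)
    {A : ιa → Matrix a a ℂ} {B : ιb → Matrix b b ℂ} {C : ιc → Matrix c c ℂ}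
    (hA : ∀ i, (A i).IsHermitian) (hB : ∀ i, (B i).IsHermitian)
    (hC : ∀ i, (C i).IsHermitian) :
    covMat ((σA ⊗ₖ σB) ⊗ₖ σC)
      (Sum.elim (fun i => (A i ⊗ₖ (1 : Matrix b b ℂ)) ⊗ₖ (1 : Matrix c c ℂ))
        (Sum.elim (fun i => ((1 : Matrix a a ℂ) ⊗ₖ B i) ⊗ₖ (1 : Matrix c c ℂ))
          (fun i => ((1 : Matrix a a ℂ) ⊗ₖ (1 : Matrix b b ℂ)) ⊗ₖ C i)))
      = fromBlocks (covMat σA A) 0 0 (fromBlocks (covMat σB B) 0 0 (covMat σC C)) := by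
  have hσAB := hσA.kronecker hσB
  have htrAB : (σA ⊗ₖ σB).trace = 1 := by rw [trace_kronecker, htrA, htrB, one_mul]
  ext (i | i | i) (j | j | j) <;>
    simp only [covMat_apply, Sum.elim_inl, Sum.elim_inr, fromBlocks_apply₁₁, fromBlocks_apply₁₂,
      fromBlocks_apply₂₁, fromBlocks_apply₂₂, Matrix.zero_apply, one_kronecker_one,
      covariance_kronecker_one htrC, covariance_kronecker_one htrB,
      covariance_one_kronecker htrA, covariance_one_kronecker htrAB]
  all_goals simp [covariance_kronecker_one_one_kronecker, covariance_one_kronecker_kronecker_one,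
    IsHermitian.kronecker, isHermitian_one, hσA, hσB, hσC, hσAB, htrA, htrB, htrC, htrAB, hA, hB,
    hC]

/-- Tripartite CMC: for a fully separable state
ρ = Σ_k p_k |φ_A^(k)⟩⟨φ_A^(k)| ⊗ |φ_B^(k)⟩⟨φ_B^(k)| ⊗ |φ_C^(k)⟩⟨φ_C^(k)|,
the block covariance matrix with local observables satisfies
γ(ρ) ≥ κ_A ⊕ κ_B ⊕ κ_C, where κ_X = Σ_k p_k γ(|φ_X^(k)⟩⟨φ_X^(k)|). -/
theorem stmt_7 (dA dB dC nA nB nC n : ℕ)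
    (p : Fin n → ℝ) (hp : ∀ k, 0 ≤ p k) (hpsum : ∑ k, p k = 1)
    (φA : Fin n → Fin dA → ℂ) (φB : Fin n → Fin dB → ℂ) (φC : Fin n → Fin dC → ℂ)
    (hφA : ∀ k, ∑ i, Complex.normSq (φA k i) = 1)
    (hφB : ∀ k, ∑ i, Complex.normSq (φB k i) = 1)
    (hφC : ∀ k, ∑ i, Complex.normSq (φC k i) = 1)
    (A : Fin nA → Matrix (Fin dA) (Fin dA) ℂ)
    (B : Fin nB → Matrix (Fin dB) (Fin dB) ℂ)
    (C : Fin nC → Matrix (Fin dC) (Fin dC) ℂ)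
    (hA : ∀ i, (A i).IsHermitian) (hB : ∀ i, (B i).IsHermitian)
    (hC : ∀ i, (C i).IsHermitian)
    (ρ : Matrix ((Fin dA × Fin dB) × Fin dC) ((Fin dA × Fin dB) × Fin dC) ℂ)
    (hρ : ρ = ∑ k, p k •
      ((vecMulVec (φA k) (star (φA k)) ⊗ₖ vecMulVec (φB k) (star (φB k)))
        ⊗ₖ vecMulVec (φC k) (star (φC k))))
    (obs : (Fin nA ⊕ (Fin nB ⊕ Fin nC)) →
      Matrix ((Fin dA × Fin dB) × Fin dC) ((Fin dA × Fin dB) × Fin dC) ℂ)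
    (hobs : obs = Sum.elim
      (fun i => (A i ⊗ₖ (1 : Matrix (Fin dB) (Fin dB) ℂ)) ⊗ₖ (1 : Matrix (Fin dC) (Fin dC) ℂ))
      (Sum.elim
        (fun i => ((1 : Matrix (Fin dA) (Fin dA) ℂ) ⊗ₖ B i) ⊗ₖ (1 : Matrix (Fin dC) (Fin dC) ℂ))
        (fun i => ((1 : Matrix (Fin dA) (Fin dA) ℂ) ⊗ₖ (1 : Matrix (Fin dB) (Fin dB) ℂ)) ⊗ₖ C i)))
    (κA : Matrix (Fin nA) (Fin nA) ℝ) (κB : Matrix (Fin nB) (Fin nB) ℝ)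
    (κC : Matrix (Fin nC) (Fin nC) ℝ)
    (hκA : κA = ∑ k, p k • covMat (vecMulVec (φA k) (star (φA k))) A)
    (hκB : κB = ∑ k, p k • covMat (vecMulVec (φB k) (star (φB k))) B)
    (hκC : κC = ∑ k, p k • covMat (vecMulVec (φC k) (star (φC k))) C) :
    (covMat ρ obs - Matrix.fromBlocks κA 0 0 (Matrix.fromBlocks κB 0 0 κC)).PosSemidef := by
  have hblocks : fromBlocks κA 0 0 (fromBlocks κB 0 0 κC) = ∑ k, p k • covMat
      ((vecMulVec (φA k) (star (φA k)) ⊗ₖ vecMulVec (φB k) (star (φB k)))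
        ⊗ₖ vecMulVec (φC k) (star (φC k))) obs := by
    simp only [hobs, covMat_kronecker_kronecker (posSemidef_vecMulVec_self_star _).isHermitian
      (posSemidef_vecMulVec_self_star _).isHermitian (posSemidef_vecMulVec_self_star _).isHermitian
      (trace_vecMulVec_self_star (hφA _)) (trace_vecMulVec_self_star (hφB _))
      (trace_vecMulVec_self_star (hφC _)) hA hB hC, hκA, hκB, hκC]
    ext (i | i | i) (j | j | j) <;> simp [Matrix.sum_apply]
  rw [hblocks, hρ]
  exact posSemidef_covMat_sum_smul_sub_sum_smul_covMat p hp hpsum _ obs
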